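/- Let d ≥ 2, c > 0 and α ∈ (0,1]. Let u : ℝ^d → ℂ be continuously differentiable with u and ∇u bounded on ℝ^d, ∫_{ℝ^d} |∇u(x)|² dx < ∞, and suppose u(x) = 0 for every x with |x| = c·(log(1+n))^α for some integer n ≥ 0. Then there exist constants c₀ > 0 and C > 0 such that |u(x)| ≤ C e^{−c₀|x|} for all x ∈ ℝ^d. -/

import Mathlib

/-!
A function whose gradient is bounded by `M` is `M`-Lipschitz, so if it vanishes on the sphere of
radius `ρₖ ≤ ‖x‖` then `‖u x‖ ≤ M (‖x‖ - ρₖ)`. For `ρₙ = c (log (1 + n)) ^ α` choose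
`ρₖ ≤ ‖x‖ < ρₖ₊₁`: subadditivity of `t ↦ t ^ α` bounds the gap `ρₖ₊₁ - ρₖ` by `c (1 + k) ^ (-α)`,
while `t ^ α ≤ 1 + t` gives `exp (α ρₖ₊₁ / c) ≤ e ^ α (2 + k) ^ α`, so the product is bounded
and `‖u x‖ ≲ exp (-α ‖x‖ / c)`.
-/

open MeasureTheory Filter Real

noncomputable def logRadius (c α : ℝ) (n : ℕ) : ℝ := c * Real.log (1 + (n : ℝ)) ^ α

section logRadius

variable {c α : ℝ}

lemma log_one_add_natCast_nonneg (n : ℕ) : 0 ≤ Real.log (1 + n) :=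
  log_nonneg (le_add_of_nonneg_right n.cast_nonneg)

lemma logRadius_nonneg (hc : 0 ≤ c) (n : ℕ) : 0 ≤ logRadius c α n :=
  mul_nonneg hc (rpow_nonneg (log_one_add_natCast_nonneg n) α)

lemma logRadius_zero (hα : α ≠ 0) : logRadius c α 0 = 0 := by
  simp [logRadius, zero_rpow hα]

lemma tendsto_logRadius_atTop (hc : 0 < c) (hα : 0 < α) :
    Tendsto (logRadius c α) atTop atTop :=
  ((tendsto_rpow_atTop hα).comp <| tendsto_log_atTop.comp <|
    tendsto_atTop_add_const_left _ 1 tendsto_natCast_atTop_atTop).const_mul_atTop hc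

lemma log_one_add_succ_sub_log_one_add_le (k : ℕ) :
    Real.log (1 + (k + 1 : ℕ)) - Real.log (1 + k) ≤ 1 / (1 + k) := by
  have hk : (0 : ℝ) < 1 + k := by positivity
  rw [← log_div (by positivity) hk.ne']
  refine (log_le_sub_one_of_pos (by positivity)).trans_eq ?_
  field_simp
  push_cast
  ring

lemma logRadius_succ_sub_le (hc : 0 ≤ c) (hα₀ : 0 ≤ α) (hα₁ : α ≤ 1) (k : ℕ) :
    logRadius c α (k + 1) - logRadius c α k ≤ c / (1 + k) ^ α := by
  have hlog := log_one_add_natCast_nonneg k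
  have hgap := log_one_add_succ_sub_log_one_add_le k
  have hgap₀ : 0 ≤ Real.log (1 + (k + 1 : ℕ)) - Real.log (1 + k) :=
    sub_nonneg.2 (log_le_log (by positivity) (by push_cast; linarith))
  have hsub := rpow_add_le_add_rpow hlog hgap₀ hα₀ hα₁
  rw [add_sub_cancel] at hsub
  have hgapα := rpow_le_rpow hgap₀ hgap hα₀
  rw [div_rpow zero_le_one (by positivity), one_rpow] at hgapα
  rw [logRadius, logRadius, div_eq_mul_one_div c]
  nlinarith

lemma exp_mul_logRadius_succ_le (hc : 0 < c) (hα₀ : 0 ≤ α) (hα₁ : α ≤ 1) (k : ℕ) :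
    exp (α / c * logRadius c α (k + 1)) ≤ exp α * (2 + k) ^ α := by
  have h2k : (0 : ℝ) < 2 + k := by positivity
  set L := Real.log (1 + (k + 1 : ℕ))
  have hL : 0 ≤ L := log_one_add_natCast_nonneg (k + 1)
  have hLα : L ^ α ≤ 1 + L :=
    (rpow_le_rpow hL (by linarith) hα₀).trans (rpow_le_self_of_one_le (by linarith) hα₁)
  have hL2 : L = Real.log (2 + k) := by simp only [L]; push_cast; ring_nf
  calc exp (α / c * logRadius c α (k + 1)) = exp (α * L ^ α) := by
        simp only [logRadius, L]; field_simp
    _ ≤ exp (α + α * Real.log (2 + k)) := by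
        rw [← hL2]; gcongr; nlinarith
    _ = exp α * (2 + k) ^ α := by
        rw [exp_add, rpow_def_of_pos h2k, mul_comm α]

lemma logRadius_gap_mul_exp_le (hc : 0 < c) (hα₀ : 0 ≤ α) (hα₁ : α ≤ 1) (k : ℕ) :
    (logRadius c α (k + 1) - logRadius c α k) * exp (α / c * logRadius c α (k + 1)) ≤
      c * (2 * exp 1) ^ α := by
  have h1k : (0 : ℝ) < 1 + k := by positivity
  have hratio : ((2 + k : ℝ) / (1 + k)) ^ α ≤ 2 ^ α :=
    rpow_le_rpow (by positivity) ((div_le_iff₀ h1k).2 (by linarith)) hα₀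
  calc _ ≤ c / (1 + k) ^ α * (exp α * (2 + k) ^ α) :=
        mul_le_mul (logRadius_succ_sub_le hc.le hα₀ hα₁ k)
          (exp_mul_logRadius_succ_le hc hα₀ hα₁ k) (exp_pos _).le (by positivity)
    _ = c * exp α * ((2 + k) / (1 + k)) ^ α := by
        rw [div_rpow (by positivity) h1k.le]; field_simp
    _ ≤ c * exp α * 2 ^ α := by gcongr
    _ = c * (2 * exp 1) ^ α := by
        rw [mul_rpow zero_le_two (exp_pos 1).le, ← exp_one_rpow, mul_comm (2 ^ α), mul_assoc]

end logRadius

lemma exists_le_lt_succ_of_tendsto_atTop {f : ℕ → ℝ} (hf : Tendsto f atTop atTop) {r : ℝ}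
    (hr : f 0 ≤ r) : ∃ k, f k ≤ r ∧ r < f (k + 1) := by
  classical
  have hex : ∃ n, r < f n := (hf.eventually_gt_atTop r).exists
  have hpos : Nat.find hex ≠ 0 := fun h => (Nat.find_spec hex).not_ge (h ▸ hr)
  obtain ⟨k, hk⟩ := Nat.exists_eq_succ_of_ne_zero hpos
  refine ⟨k, not_lt.1 (Nat.find_min hex (by omega)), ?_⟩
  rw [← Nat.succ_eq_add_one, ← hk]
  exact Nat.find_spec hex

lemma norm_le_mul_sub_of_eq_zero_on_sphere {E F : Type*} [NormedAddCommGroup E]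
    [NormedSpace ℝ E] [SeminormedAddCommGroup F] {f : E → F} {M s : ℝ}
    (hf : ∀ y z, ‖f y - f z‖ ≤ M * ‖y - z‖) (h0 : ∀ y, ‖y‖ = s → f y = 0) {x : E}
    (hs : 0 ≤ s) (hsx : s ≤ ‖x‖) : ‖f x‖ ≤ M * (‖x‖ - s) := by
  have hscale : 0 ≤ s / ‖x‖ := div_nonneg hs (norm_nonneg x)
  set y := (s / ‖x‖) • x
  have hy : ‖y‖ = s := by
    rcases (norm_nonneg x).eq_or_lt with hx | hx
    · simp only [y, ← hx, div_zero, zero_smul, norm_zero]; linarith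
    · rw [norm_smul, norm_of_nonneg hscale, div_mul_cancel₀ _ hx.ne']
  have hxy : ‖x - y‖ = ‖x‖ - s := by
    rw [(SameRay.sameRay_nonneg_smul_right x hscale).norm_sub, hy, abs_of_nonneg (by linarith)]
  simpa [h0 y hy, hxy] using hf x y

theorem norm_mul_exp_le_of_eq_zero_on_logRadius_spheres {E F : Type*} [NormedAddCommGroup E]
    [NormedSpace ℝ E] [SeminormedAddCommGroup F] {f : E → F} {M c α : ℝ} (hM : 0 ≤ M)
    (hc : 0 < c) (hα₀ : 0 < α) (hα₁ : α ≤ 1) (hf : ∀ y z, ‖f y - f z‖ ≤ M * ‖y - z‖)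
    (h0 : ∀ y, (∃ n, ‖y‖ = logRadius c α n) → f y = 0) (x : E) :
    ‖f x‖ * exp (α / c * ‖x‖) ≤ M * c * (2 * exp 1) ^ α := by
  obtain ⟨k, hk, hk1⟩ := exists_le_lt_succ_of_tendsto_atTop (tendsto_logRadius_atTop hc hα₀)
    (r := ‖x‖) (by rw [logRadius_zero hα₀.ne']; exact norm_nonneg x)
  have hfx := norm_le_mul_sub_of_eq_zero_on_sphere hf (fun y hy => h0 y ⟨k, hy⟩)
    (logRadius_nonneg hc.le k) hk
  calc ‖f x‖ * exp (α / c * ‖x‖)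
      ≤ M * (logRadius c α (k + 1) - logRadius c α k) * exp (α / c * logRadius c α (k + 1)) := by
        gcongr
        · exact mul_nonneg hM (by linarith)
        · exact hfx.trans (by gcongr)
    _ ≤ M * c * (2 * exp 1) ^ α := by
        rw [mul_assoc, mul_assoc]
        exact mul_le_mul_of_nonneg_left (logRadius_gap_mul_exp_le hc hα₀.le hα₁ k) hM

theorem stmt13 (d : ℕ) (c α : ℝ) (hc : 0 < c) (hα : α ∈ Set.Ioc (0:ℝ) 1)
    (u : EuclideanSpace ℝ (Fin d) → ℂ) (hu : ContDiff ℝ 1 u)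
    (hgb : ∃ M : ℝ, ∀ x, ‖fderiv ℝ u x‖ ≤ M)
    (hzero : ∀ x : EuclideanSpace ℝ (Fin d),
      (∃ n : ℕ, ‖x‖ = c * Real.log (1 + (n:ℝ)) ^ α) → u x = 0) :
    ∃ c₀ C : ℝ, 0 < c₀ ∧ 0 < C ∧
      ∀ x : EuclideanSpace ℝ (Fin d), ‖u x‖ ≤ C * Real.exp (-c₀ * ‖x‖) := by
  obtain ⟨hα₀, hα₁⟩ := hα
  obtain ⟨M, hM⟩ := hgb
  have hlip : ∀ y z, ‖u y - u z‖ ≤ max M 1 * ‖y - z‖ := fun y z =>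
    convex_univ.norm_image_sub_le_of_norm_fderiv_le (fun w _ => hu.differentiable one_ne_zero w)
      (fun w _ => (hM w).trans (le_max_left M 1)) trivial trivial
  refine ⟨α / c, max M 1 * c * (2 * exp 1) ^ α, by positivity, by positivity, fun x => ?_⟩
  rw [neg_mul, exp_neg, ← div_eq_mul_inv, le_div_iff₀ (exp_pos _)]
  exact norm_mul_exp_le_of_eq_zero_on_logRadius_spheres (le_max_of_le_right zero_le_one)
    hc hα₀ hα₁ hlip hzero x
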